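/- Let A be a ℂ-algebra with involution, R a real closed extension field of ℝ, and C = R[i]. If φ : A → C is a completely positive ℂ-linear functional with φ(a*) = conj(φ(a)) for all a ∈ A, then φ satisfies the Cauchy–Schwarz inequality: |φ(a*b)|² ≤ φ(a*a)·φ(b*b) in R for all a, b ∈ A. -/

import Mathlib

open Polynomial Matrix

/-- A linearly ordered field is *real closed* if every nonnegative element is a square and
every polynomial of odd degree has a root. -/
def IsRealClosed' (R : Type*) [Field R] [LinearOrder R] [IsStrictOrderedRing R] : Prop :=
  (∀ x : R, 0 ≤ x → ∃ y : R, y ^ 2 = x) ∧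
    ∀ p : Polynomial R, Odd p.natDegree → ∃ x : R, p.IsRoot x

noncomputable section

set_option maxRecDepth 8000

/-- `Cplx R = R[i] = R[X]/(X² + 1)`. -/
abbrev Cplx (R : Type*) [CommRing R] : Type _ := AdjoinRoot (X ^ 2 + 1 : R[X])

namespace Cplx

variable (R : Type*) [CommRing R]

/-- The imaginary unit `i` of `R[i]`. -/
def I : Cplx R := AdjoinRoot.root _

theorem I_sq : (I R) ^ 2 = -1 := by
  have h : (I R) ^ 2 + 1 = 0 := by
    have h := AdjoinRoot.eval₂_root (X ^ 2 + 1 : R[X])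
    simpa only [I, eval₂_add, eval₂_pow, eval₂_X, eval₂_one] using h
  exact eq_neg_of_add_eq_zero_left h

variable {R}

/-- Conjugation on `R[i]`: the `R`-algebra involution determined by `i ↦ -i`. -/
def conj : Cplx R →+* Cplx R :=
  AdjoinRoot.lift (algebraMap R _) (-(I R)) (by
    have h : (I R) ^ 2 + 1 = 0 := by
      have h := AdjoinRoot.eval₂_root (X ^ 2 + 1 : R[X])
      simpa only [I, eval₂_add, eval₂_pow, eval₂_X, eval₂_one] using h
    simp only [eval₂_add, eval₂_pow, eval₂_X, eval₂_one]
    calc (-(I R)) ^ 2 + 1 = (I R) ^ 2 + 1 := by ring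
    _ = 0 := h)

/-- `z ∈ R[i]` is *nonnegative* if it lies in `R` and is nonnegative there. -/
def nonneg {R' : Type*} [Field R'] [LinearOrder R'] [IsStrictOrderedRing R'] (z : Cplx R') : Prop :=
  ∃ r : R', 0 ≤ r ∧ z = algebraMap R' (Cplx R') r

/-- `z ∈ R[i]` is *positive* if it lies in `R` and is positive there. -/
def pos {R' : Type*} [Field R'] [LinearOrder R'] [IsStrictOrderedRing R'] (z : Cplx R') : Prop :=
  ∃ r : R', 0 < r ∧ z = algebraMap R' (Cplx R') r

/-- The embedding `ℂ = ℝ[i] → R[i]` induced by an embedding `f : ℝ → R`,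
`x + y·i ↦ f x + f y · i`. -/
def emb (f : ℝ →+* R) : ℂ →+* Cplx R where
  toFun z := algebraMap R (Cplx R) (f z.re) + algebraMap R (Cplx R) (f z.im) * I R
  map_one' := by simp
  map_zero' := by simp
  map_add' z w := by
    simp only [Complex.add_re, Complex.add_im, map_add]
    ring
  map_mul' z w := by
    have hI : (I R) ^ 2 = -1 := I_sq R
    simp only [Complex.mul_re, Complex.mul_im, map_add, map_sub, _root_.map_mul]
    linear_combination (-(algebraMap R (Cplx R) (f z.im) * algebraMap R (Cplx R) (f w.im))) * hI

/-- A matrix with entries in `R[i]` is positive semidefinite if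
`∑ⱼₖ conj(zⱼ)·zₖ·Mⱼₖ ≥ 0` for all vectors `z`. -/
def PSD {R' : Type*} [Field R'] [LinearOrder R'] [IsStrictOrderedRing R'] {m : ℕ}
    (M : Matrix (Fin m) (Fin m) (Cplx R')) : Prop :=
  ∀ z : Fin m → Cplx R', Cplx.nonneg (∑ j, ∑ k, Cplx.conj (z j) * z k * M j k)

end Cplx

section StarAlgebra

variable {R : Type*} [Field R] [LinearOrder R] [IsStrictOrderedRing R]
variable {A : Type*} [NonUnitalRing A] [Module ℂ A] [StarRing A] [StarModule ℂ A]

/-- `φ : A → R[i]` is `ℂ`-linear (via the embedding `ℂ → R[i]` induced by `f`) and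
compatible with the involutions: `φ(a*) = conj (φ a)`. -/
def IsHermitianLinear (f : ℝ →+* R) (φ : A → Cplx R) : Prop :=
  (∀ a b : A, φ (a + b) = φ a + φ b) ∧
  (∀ (c : ℂ) (a : A), φ (c • a) = Cplx.emb f c * φ a) ∧
  (∀ a : A, φ (star a) = Cplx.conj (φ a))

/-- `φ : A → R[i]` is *completely positive* if for every `m` the entrywise map
`Mₘ(A) → Mₘ(R[i])` maps sums of hermitian squares to positive semidefinite matrices. -/
def CompletelyPositive (φ : A → Cplx R) : Prop :=
  ∀ (m n : ℕ) (B : Fin n → Matrix (Fin m) (Fin m) A),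
    Cplx.PSD (fun j k => φ ((∑ l, (B l)ᴴ * B l) j k))

/-- The set of sums of hermitian squares in a `*`-algebra. -/
def SumsOfSquares (A : Type*) [NonUnitalRing A] [Star A] : Set A :=
  {x | ∃ (n : ℕ) (a : Fin n → A), x = ∑ i, star (a i) * a i}

end StarAlgebra

universe u v

/-!
Applying complete positivity to the single matrix `[[a, b], [0, 0]]` shows that the Gram matrix
`[[φ(a*a), φ(a*b)], [φ(b*a), φ(b*b)]]` is positive semidefinite, and it is hermitian because
`φ(x*) = conj (φ x)`. For such a matrix `[[p, q], [conj q, r]]` over `R[i]`, evaluating the form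
at `(t, -conj q)` with `t ∈ R` gives the real quadratic `p t² - 2|q|² t + |q|² r ≥ 0`; its
discriminant `4|q|²(|q|² - p r)` is therefore `≤ 0`, whence `|q|² ≤ p r`.
-/

namespace Cplx

section CommRing

variable {R : Type*} [CommRing R]

lemma conj_algebraMap (x : R) : conj (algebraMap R (Cplx R) x) = algebraMap R (Cplx R) x :=
  AdjoinRoot.lift_of _

lemma conj_I : conj (I R) = -I R :=
  AdjoinRoot.lift_root _

lemma conj_conj (z : Cplx R) : conj (conj z) = z := by
  suffices h : conj.comp conj = RingHom.id (Cplx R) from congr($h z)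
  refine AdjoinRoot.ringHom_ext (RingHom.ext fun x => ?_) ?_
  · simp only [RingHom.comp_apply, ← AdjoinRoot.algebraMap_eq, conj_algebraMap, RingHom.id_apply]
  · change conj (conj (I R)) = I R
    rw [conj_I, map_neg, conj_I, neg_neg]

lemma monic_X_sq_add_one : (X ^ 2 + 1 : R[X]).Monic :=
  monic_X_pow_add_C 1 two_ne_zero

lemma natDegree_X_sq_add_one [Nontrivial R] : (X ^ 2 + 1 : R[X]).natDegree = 2 := by
  simpa using natDegree_X_pow_add_C (R := R) (n := 2) (r := 1)

instance [Nontrivial R] : Nontrivial (Cplx R) :=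
  Ideal.Quotient.nontrivial_iff.mpr <| Ideal.span_singleton_ne_top fun h => by
    simpa [natDegree_X_sq_add_one] using congrArg natDegree (monic_X_sq_add_one.eq_one_of_isUnit h)

lemma exists_eq_add_mul_I [Nontrivial R] (z : Cplx R) :
    ∃ x y : R, z = algebraMap R (Cplx R) x + algebraMap R (Cplx R) y * I R := by
  obtain ⟨p, hdeg, rfl⟩ := (AdjoinRoot.powerBasis' (monic_X_sq_add_one (R := R))).exists_eq_aeval z
  have hp : p.natDegree ≤ 1 := by
    simp only [AdjoinRoot.powerBasis'_dim, natDegree_X_sq_add_one] at hdeg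
    omega
  refine ⟨p.coeff 0, p.coeff 1, ?_⟩
  conv_lhs => rw [eq_X_add_C_of_natDegree_le_one hp]
  simp only [map_add, map_mul, aeval_C, aeval_X, AdjoinRoot.powerBasis'_gen, I]
  ring

lemma mul_conj_add_mul_I (x y : R) :
    (algebraMap R (Cplx R) x + algebraMap R (Cplx R) y * I R) *
      conj (algebraMap R (Cplx R) x + algebraMap R (Cplx R) y * I R) =
      algebraMap R (Cplx R) (x ^ 2 + y ^ 2) := by
  simp only [map_add, map_mul, conj_algebraMap, conj_I, map_pow]
  linear_combination (-(algebraMap R (Cplx R) y) ^ 2) * I_sq R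

lemma algebraMap_injective [IsDomain R] : Function.Injective (algebraMap R (Cplx R)) :=
  AdjoinRoot.of.injective_of_degree_ne_zero (by
    rw [degree_eq_natDegree monic_X_sq_add_one.ne_zero, natDegree_X_sq_add_one]; decide)

end CommRing

section OrderedField

variable {R : Type*} [Field R] [LinearOrder R] [IsStrictOrderedRing R]

@[simp]
lemma nonneg_algebraMap_iff {x : R} : nonneg (algebraMap R (Cplx R) x) ↔ 0 ≤ x :=
  ⟨fun ⟨_, hr, he⟩ => algebraMap_injective he ▸ hr, fun hx => ⟨x, hx, rfl⟩⟩

lemma nonneg_mul_conj (z : Cplx R) : nonneg (z * conj z) := by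
  obtain ⟨x, y, rfl⟩ := exists_eq_add_mul_I z
  exact ⟨_, by positivity, mul_conj_add_mul_I x y⟩

lemma PSD.nonneg_two {M : Matrix (Fin 2) (Fin 2) (Cplx R)} (hM : PSD M) (z w : Cplx R) :
    nonneg (conj z * z * M 0 0 + conj z * w * M 0 1 + conj w * z * M 1 0 + conj w * w * M 1 1) := by
  simpa only [Fin.sum_univ_two, Matrix.cons_val_zero, Matrix.cons_val_one, ← add_assoc]
    using hM ![z, w]

lemma PSD.nonneg_det_two {M : Matrix (Fin 2) (Fin 2) (Cplx R)} (hM : PSD M)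
    (hherm : M 1 0 = conj (M 0 1)) : nonneg (M 0 0 * M 1 1 - M 0 1 * conj (M 0 1)) := by
  obtain ⟨p, hp, hpM⟩ : nonneg (M 0 0) := by simpa using hM.nonneg_two 1 0
  obtain ⟨r, hr, hrM⟩ : nonneg (M 1 1) := by simpa using hM.nonneg_two 0 1
  obtain ⟨n, hn, hnM⟩ := nonneg_mul_conj (M 0 1)
  have hquad (t : R) : 0 ≤ p * (t * t) + (-2 * n) * t + n * r := by
    have h := hM.nonneg_two (algebraMap R _ t) (-conj (M 0 1))
    rw [← nonneg_algebraMap_iff]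
    convert h using 1
    rw [hherm, map_neg, conj_conj, conj_algebraMap, hpM, hrM]
    simp only [map_add, map_mul, map_neg, map_ofNat]
    linear_combination (2 * algebraMap R (Cplx R) t - algebraMap R (Cplx R) r) * hnM
  have hdisc : 4 * n * (n - p * r) ≤ 0 := by
    have := discrim_le_zero hquad
    rw [discrim] at this
    linarith
  rw [hpM, hrM, hnM, ← map_mul, ← map_sub, nonneg_algebraMap_iff, sub_nonneg]
  rcases hn.eq_or_lt with rfl | hn_pos
  · exact mul_nonneg hp hr
  · nlinarith

end OrderedField

end Cplx

section CompletelyPositive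

variable {R : Type*} [Field R] [LinearOrder R] [IsStrictOrderedRing R]
variable {A : Type*} [NonUnitalRing A] [StarRing A]

lemma CompletelyPositive.psd_gram {φ : A → Cplx R} (hcp : CompletelyPositive φ) {m : ℕ}
    (v : Fin m → A) : Cplx.PSD fun j k => φ (star (v j) * v k) := by
  cases m with
  | zero => exact fun _ => ⟨0, le_rfl, by simp⟩
  | succ m =>
    convert hcp (m + 1) 1 fun _ => Matrix.of fun i j => if i = 0 then v j else 0 using 4 with j k
    simp [Matrix.mul_apply, Matrix.conjTranspose_apply]

end CompletelyPositive

theorem completelyPositive_cauchy_schwarz_general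
    {R : Type u} [Field R] [LinearOrder R] [IsStrictOrderedRing R] (f : ℝ →+*o R)
    {A : Type v} [NonUnitalRing A] [Module ℂ A]
    [StarRing A]
    (φ : A → Cplx R) (hφ : IsHermitianLinear f.toRingHom φ)
    (hcp : CompletelyPositive φ) (a b : A) :
    Cplx.nonneg (φ (star a * a) * φ (star b * b)
      - φ (star a * b) * Cplx.conj (φ (star a * b))) := by
  refine (hcp.psd_gram ![a, b]).nonneg_det_two ?_
  simp only [Matrix.cons_val_zero, Matrix.cons_val_one, ← hφ.2.2, star_mul, star_star]

/-- **Cauchy–Schwarz inequality for completely positive functionals.**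
Let `A` be a `ℂ`-algebra with involution, `R` a real closed extension field of `ℝ` and
`C = R[i]`.  If `φ : A → C` is a completely positive `ℂ`-linear functional with
`φ(a*) = conj (φ a)`, then `|φ(a*b)|² ≤ φ(a*a)·φ(b*b)` in `R`, i.e.
`φ(a*a)·φ(b*b) - φ(a*b)·conj(φ(a*b)) ≥ 0`. -/
theorem completelyPositive_cauchy_schwarz
    {R : Type u} [Field R] [LinearOrder R] [IsStrictOrderedRing R] (f : ℝ →+*o R) (hR : IsRealClosed' R)
    {A : Type v} [NonUnitalRing A] [Module ℂ A] [SMulCommClass ℂ A A] [IsScalarTower ℂ A A]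
    [StarRing A] [StarModule ℂ A]
    (φ : A → Cplx R) (hφ : IsHermitianLinear f.toRingHom φ)
    (hcp : CompletelyPositive φ) (a b : A) :
    Cplx.nonneg (φ (star a * a) * φ (star b * b)
      - φ (star a * b) * Cplx.conj (φ (star a * b))) :=
  completelyPositive_cauchy_schwarz_general f φ hφ hcp a b
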